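/- Let (l, p, b, c) be a g-admissible quadruple for an integer g ≥ 2. Then the polynomial x^{2g} − b·x − (p·c)/l^l, viewed as a polynomial with coefficients in the field ℚ_l of l-adic numbers, is irreducible over ℚ_l. -/

import Mathlib

/-!
Let `n = 2g` and choose `r > 0` with `r ^ n = l ^ l = ‖(p c) / l ^ l‖`. At radius `r` the Gauss norm
of `f = X ^ n - b X - (p c) / l ^ l` is `r ^ n`, attained both by the leading and by the constant
term, so its Newton polygon is a single edge. Since the Gauss norm is
multiplicative, every monic factor `G` of degree `k` inherits this: `‖G(0)‖ = r ^ k`. Then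
`‖G(0)‖ ^ n = l ^ (l k)` lies in the value group `l ^ ℤ` only if `n ∣ l k`, and `l ∣ n - 1` makes
`n` coprime to `l`, so `k = 0` or `k = n`.
-/

open Polynomial

namespace Polynomial

section Ring

variable {R : Type*} [Ring R] {v : AbsoluteValue R ℝ} {c : ℝ}

theorem gaussNorm_neg (p : R[X]) : (-p).gaussNorm v c = p.gaussNorm v c := by
  simp only [gaussNorm, coeff_neg, AbsoluteValue.map_neg, support_neg]

theorem gaussNorm_sub_le (hna : IsNonarchimedean v) (hc : 0 ≤ c) (p q : R[X]) :
    (p - q).gaussNorm v c ≤ max (p.gaussNorm v c) (q.gaussNorm v c) := by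
  simpa [sub_eq_add_neg, gaussNorm_neg] using isNonarchimedean_gaussNorm v hna hc p (-q)

theorem coeff_zero_X_pow_sub_C_mul_X_sub_C {n : ℕ} (hn : n ≠ 0) (b u : R) :
    (X ^ n - C b * X - C u).coeff 0 = -u := by
  simp [coeff_X_pow, hn.symm]

theorem monic_X_pow_sub_C_mul_X_sub_C [Nontrivial R] {n : ℕ} (hn : 2 ≤ n) (b u : R) :
    (X ^ n - C b * X - C u).Monic := by
  rw [sub_sub]
  exact monic_X_pow_sub (degree_linear_le.trans_lt (by exact_mod_cast hn))

theorem natDegree_X_pow_sub_C_mul_X_sub_C [Nontrivial R] {n : ℕ} (hn : 2 ≤ n) (b u : R) :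
    (X ^ n - C b * X - C u).natDegree = n := by
  rw [sub_sub, natDegree_sub_eq_left_of_natDegree_lt] <;> rw [natDegree_X_pow]
  exact natDegree_linear_le.trans_lt hn

variable [Nontrivial R]

theorem gaussNorm_X_pow_sub_C_mul_X_sub_C_le (hna : IsNonarchimedean v) (hc : 0 ≤ c) (n : ℕ)
    (b u : R) :
    (X ^ n - C b * X - C u).gaussNorm v c ≤ max (max (c ^ n) (v b * c)) (v u) := by
  have h := gaussNorm_sub_le hna hc (X ^ n) (C b * X)
  rw [X_pow_eq_monomial, C_mul_X_eq_monomial, gaussNorm_monomial, gaussNorm_monomial, v.map_one,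
    one_mul, pow_one, ← X_pow_eq_monomial, ← C_mul_X_eq_monomial] at h
  calc _ ≤ max ((X ^ n - C b * X).gaussNorm v c) ((C u).gaussNorm v c) :=
        gaussNorm_sub_le hna hc _ _
    _ ≤ _ := by rw [gaussNorm_C]; gcongr

theorem Monic.pow_natDegree_le_gaussNorm {p : R[X]} (hp : p.Monic) (hc : 0 ≤ c) :
    c ^ p.natDegree ≤ p.gaussNorm v c := by
  simpa [hp.coeff_natDegree] using p.le_gaussNorm v hc p.natDegree

/-- The hypotheses on `f` say that its Newton polygon is a single edge; monic factors inherit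
this. -/
theorem Monic.abv_coeff_zero_of_mul_eq (hna : IsNonarchimedean v) (hc : 0 < c) {f g h : R[X]}
    (hg : g.Monic) (hh : h.Monic) (hgh : g * h = f)
    (hf : f.gaussNorm v c ≤ c ^ f.natDegree) (hf0 : v (f.coeff 0) = c ^ f.natDegree) :
    v (g.coeff 0) = c ^ g.natDegree := by
  have hdeg : f.natDegree = g.natDegree + h.natDegree := hgh ▸ hg.natDegree_mul hh
  have hg0 : v (g.coeff 0) ≤ g.gaussNorm v c := by simpa using g.le_gaussNorm v hc.le 0
  have hh0 : v (h.coeff 0) ≤ h.gaussNorm v c := by simpa using h.le_gaussNorm v hc.le 0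
  have hgN := hg.pow_natDegree_le_gaussNorm (v := v) hc.le
  have hhN := hh.pow_natDegree_le_gaussNorm (v := v) hc.le
  have hhN_pos : 0 < h.gaussNorm v c := (pow_pos hc _).trans_le hhN
  have hprod : g.gaussNorm v c * h.gaussNorm v c ≤ c ^ g.natDegree * c ^ h.natDegree := by
    rw [← gaussNorm_mul hna hc, hgh, ← pow_add, ← hdeg]
    exact hf
  have hconst : v (g.coeff 0) * v (h.coeff 0) = c ^ g.natDegree * c ^ h.natDegree := by
    rw [← v.map_mul, ← mul_coeff_zero, hgh, hf0, hdeg, pow_add]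
  have hg_le : g.gaussNorm v c ≤ c ^ g.natDegree := by
    refine le_of_mul_le_mul_right (hprod.trans' ?_) (pow_pos hc h.natDegree)
    exact mul_le_mul_of_nonneg_left hhN (gaussNorm_nonneg _ _ hc.le)
  have hle_g0 : g.gaussNorm v c ≤ v (g.coeff 0) := by
    refine le_of_mul_le_mul_right ?_ hhN_pos
    calc _ ≤ _ := hprod
      _ = _ := hconst.symm
      _ ≤ _ := mul_le_mul_of_nonneg_left hh0 (v.nonneg _)
  exact le_antisymm (hg0.trans hg_le) (hgN.trans hle_g0)

end Ring

theorem Monic.irreducible_of_gaussNorm {R : Type*} [CommRing R] [IsDomain R]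
    {v : AbsoluteValue R ℝ} {c : ℝ} (hna : IsNonarchimedean v) (hc : 0 < c) {f : R[X]}
    (hf : f.Monic) (hdeg : 0 < f.natDegree) (hnorm : f.gaussNorm v c ≤ c ^ f.natDegree)
    (hf0 : v (f.coeff 0) = c ^ f.natDegree) (hval : ∀ x k, v x = c ^ k → f.natDegree ∣ k) :
    Irreducible f := by
  refine hf.irreducible_iff_natDegree.2 ⟨fun h1 => by simp [h1] at hdeg, fun g h hg hh hgh => ?_⟩
  have hsum : f.natDegree = g.natDegree + h.natDegree := hgh ▸ hg.natDegree_mul hh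
  obtain ⟨j, hj⟩ := hval _ _ (hg.abv_coeff_zero_of_mul_eq hna hc hh hgh hnorm hf0)
  rcases j with _ | _ | j
  · omega
  · omega
  · nlinarith

end Polynomial

theorem Padic.dvd_of_norm_pow_eq_zpow {p : ℕ} [Fact p.Prime] {x : ℚ_[p]} {n : ℕ} {a : ℤ}
    (hx : x ≠ 0) (h : ‖x‖ ^ n = (p : ℝ) ^ a) : (n : ℤ) ∣ a := by
  have hp : (1 : ℝ) < p := by exact_mod_cast (Fact.out : p.Prime).one_lt
  rw [norm_eq_zpow_neg_valuation hx, ← zpow_natCast, ← zpow_mul,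
    zpow_right_inj₀ (by positivity) hp.ne'] at h
  exact ⟨-x.valuation, by rw [← h]; ring⟩

theorem Padic.dvd_of_norm_eq_pow {p n a k : ℕ} [Fact p.Prime] {r : ℝ} (hr0 : 0 < r)
    (hr : r ^ n = (p : ℝ) ^ a) (hna : n.Coprime a) {x : ℚ_[p]} (hx : ‖x‖ = r ^ k) : n ∣ k := by
  have hx0 : x ≠ 0 := norm_pos_iff.1 (hx ▸ pow_pos hr0 k)
  have hpow : ‖x‖ ^ n = (p : ℝ) ^ ((a * k : ℕ) : ℤ) := by
    rw [hx, ← pow_mul, mul_comm, pow_mul, hr, ← pow_mul, zpow_natCast]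
  exact hna.dvd_of_dvd_mul_left (Int.natCast_dvd_natCast.1 (dvd_of_norm_pow_eq_zpow hx0 hpow))

theorem mori_polynomial_irreducible_padic_general (g : ℕ) (hg : 2 ≤ g)
    (l p : ℕ) (hl : Fact l.Prime)
    (hldvd : l ∣ 2 * g - 1) (hpmod : p ≡ 1 [MOD 2 * g - 1])
    (b c : ℤ)
    (hcl : ¬ (l : ℤ) ∣ c) :
    Irreducible (Polynomial.X ^ (2 * g) - Polynomial.C (b : ℚ_[l]) * Polynomial.X
      - Polynomial.C (((p : ℚ_[l]) * (c : ℚ_[l])) / (l : ℚ_[l]) ^ l)) := by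
  set n := 2 * g
  have hn : 2 ≤ n := by omega
  have hnl : n.Coprime l :=
    ((Nat.coprime_self_sub_right (by omega : 1 ≤ n)).2 (Nat.coprime_one_right n)).coprime_dvd_right hldvd
  have hlp : l.Coprime p :=
    (Nat.Prime.coprime_iff_not_dvd hl.out).2 fun h => hl.out.not_dvd_one ((hpmod.dvd_iff hldvd).1 h)
  have hc : ‖(c : ℚ_[l])‖ = 1 :=
    le_antisymm (Padic.norm_int_le_one c) (not_lt.1 (mt Padic.norm_intCast_lt_one_iff.1 hcl))
  set u : ℚ_[l] := p * c / l ^ l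
  have hu : ‖u‖ = (l : ℝ) ^ l := by simp [u, Padic.norm_natCast_eq_one_iff.2 hlp, hc]
  set r : ℝ := ((l : ℝ) ^ l) ^ ((n : ℝ)⁻¹)
  have hr0 : 0 < r := Real.rpow_pos_of_pos (pow_pos (by exact_mod_cast hl.out.pos) l) _
  have hrn : r ^ n = (l : ℝ) ^ l := Real.rpow_inv_natCast_pow (by positivity) (by omega)
  have hr1 : 1 ≤ r := Real.one_le_rpow (one_le_pow₀ (by exact_mod_cast hl.out.one_le)) (by positivity)
  have hna : IsNonarchimedean (NormedField.toAbsoluteValue ℚ_[l]) :=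
    IsUltrametricDist.isNonarchimedean_norm
  have hdeg := natDegree_X_pow_sub_C_mul_X_sub_C hn (b : ℚ_[l]) u
  refine (monic_X_pow_sub_C_mul_X_sub_C hn (b : ℚ_[l]) u).irreducible_of_gaussNorm hna hr0
    (by omega) ?_ ?_ ?_ <;> rw [hdeg]
  · have hb : ‖(b : ℚ_[l])‖ * r ≤ r ^ n :=
      (mul_le_of_le_one_left hr0.le (Padic.norm_int_le_one b)).trans (le_self_pow₀ hr1 (by omega))
    exact (gaussNorm_X_pow_sub_C_mul_X_sub_C_le hna hr0.le n _ _).trans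
      (max_le (max_le le_rfl hb) (hu.trans hrn.symm).le)
  · rw [coeff_zero_X_pow_sub_C_mul_X_sub_C (by omega)]
    exact (norm_neg u).trans (hu.trans hrn.symm)
  · exact fun x k hx => Padic.dvd_of_norm_eq_pow hr0 hrn hnl hx

/-- For a `g`-admissible quadruple `(l, p, b, c)` (with `g ≥ 2`),
the polynomial `x^(2g) - b·x - (p·c)/l^l`, viewed over the field `ℚ_l` of
`l`-adic numbers, is irreducible over `ℚ_l`. -/
theorem mori_polynomial_irreducible_padic (g : ℕ) (hg : 2 ≤ g)
    (l p : ℕ) (hl : Fact l.Prime) (hp : p.Prime)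
    (hldvd : l ∣ 2 * g - 1) (hpmod : p ≡ 1 [MOD 2 * g - 1])
    (b c : ℤ) (hbl : ¬ (l : ℤ) ∣ b)
    (hbord : orderOf ((b : ZMod p)) = p - 1)
    (hcl : ¬ (l : ℤ) ∣ c) :
    Irreducible (Polynomial.X ^ (2 * g) - Polynomial.C (b : ℚ_[l]) * Polynomial.X
      - Polynomial.C (((p : ℚ_[l]) * (c : ℚ_[l])) / (l : ℚ_[l]) ^ l)) :=
  mori_polynomial_irreducible_padic_general g hg l p hl hldvd hpmod b c hcl
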